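/- arXiv:2403.16962 — 2 statements merged into one kernel-verified Lean document; each statement's English description precedes it below -/
import Mathlib

section
/- Let V₁, V₂ : ℝ × ℝ → ℝ be twice continuously differentiable functions such that ∂²V₁/∂a₁∂a₂ = ∂²V₂/∂a₂∂a₁ everywhere. Define Φ : ℝ × ℝ → ℝ by Φ(a₁, a₂) = ∫₀¹ ( ∂₁V₁(r a₁, r a₂) · a₁ + ∂₂V₂(r a₁, r a₂) · a₂ ) dr. Then Φ is an exact potential for the two-player game: for all a₁, a₁', a₂ ∈ ℝ, V₁(a₁', a₂) − V₁(a₁, a₂) = Φ(a₁', a₂) − Φ(a₁, a₂), and symmetrically for player 2. -/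
/-!
The integrand of `Φ` is the 1-form `ω = ∂₁V₁ dx + ∂₂V₂ dy` evaluated along the segment from `0`,
and the hypothesis on the mixed partials says exactly that `ω` is closed. By the Poincaré lemma
on the convex set `ℝ × ℝ`, `Φ` is then a primitive of `ω`, i.e. `∂₁Φ = ∂₁V₁` and `∂₂Φ = ∂₂V₂`.
Hence `V₁ - Φ` does not depend on `a₁` and `V₂ - Φ` does not depend on `a₂`.
-/

open Set

section Slices

variable {F : Type*} [NormedAddCommGroup F] [NormedSpace ℝ F] {f : ℝ × ℝ → F}
  {f' : ℝ × ℝ →L[ℝ] F} {x y : ℝ}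

theorem HasFDerivAt.hasDerivAt_slice_fst (hf : HasFDerivAt f f' (x, y)) :
    HasDerivAt (fun t => f (t, y)) (f' (1, 0)) x :=
  hf.comp_hasDerivAt x ((hasDerivAt_id x).prodMk (hasDerivAt_const x y))

theorem HasFDerivAt.hasDerivAt_slice_snd (hf : HasFDerivAt f f' (x, y)) :
    HasDerivAt (fun t => f (x, t)) (f' (0, 1)) y :=
  hf.comp_hasDerivAt y ((hasDerivAt_const y x).prodMk (hasDerivAt_id y))

theorem DifferentiableAt.deriv_slice_fst (hf : DifferentiableAt ℝ f (x, y)) :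
    deriv (fun t => f (t, y)) x = fderiv ℝ f (x, y) (1, 0) :=
  hf.hasFDerivAt.hasDerivAt_slice_fst.deriv

theorem DifferentiableAt.deriv_slice_snd (hf : DifferentiableAt ℝ f (x, y)) :
    deriv (fun t => f (x, t)) y = fderiv ℝ f (x, y) (0, 1) :=
  hf.hasFDerivAt.hasDerivAt_slice_snd.deriv

end Slices

theorem sub_eq_sub_of_hasDerivAt {F : Type*} [NormedAddCommGroup F] [NormedSpace ℝ F]
    {f g f' : ℝ → F} (hf : ∀ t, HasDerivAt f (f' t) t) (hg : ∀ t, HasDerivAt g (f' t) t)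
    (a b : ℝ) : f b - f a = g b - g a := by
  have hconst := is_const_of_deriv_eq_zero (f := f - g)
    (fun t => ((hf t).sub (hg t)).differentiableAt)
    (fun t => by simpa using ((hf t).sub (hg t)).deriv) b a
  simp only [Pi.sub_apply] at hconst
  rw [sub_eq_sub_iff_sub_eq_sub, hconst]

section PlanarOneForm

open ContinuousLinearMap

theorem ContinuousLinearMap.apply_eq_fst_smul_add_snd_smul {F : Type*} [NormedAddCommGroup F]
    [NormedSpace ℝ F] (L : ℝ × ℝ →L[ℝ] F) (v : ℝ × ℝ) : L v = v.1 • L (1, 0) + v.2 • L (0, 1) := by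
  rw [← map_smul, ← map_smul, ← map_add]
  simp

noncomputable def planarOneForm (P Q : ℝ × ℝ → ℝ) (a : ℝ × ℝ) : ℝ × ℝ →L[ℝ] ℝ :=
  P a • fst ℝ ℝ ℝ + Q a • snd ℝ ℝ ℝ

variable {P Q : ℝ × ℝ → ℝ}

@[simp]
theorem planarOneForm_apply (a v : ℝ × ℝ) : planarOneForm P Q a v = P a * v.1 + Q a * v.2 := rfl

theorem hasFDerivAt_planarOneForm {a : ℝ × ℝ} (hP : DifferentiableAt ℝ P a)
    (hQ : DifferentiableAt ℝ Q a) :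
    HasFDerivAt (planarOneForm P Q)
      ((fderiv ℝ P a).smulRight (fst ℝ ℝ ℝ) + (fderiv ℝ Q a).smulRight (snd ℝ ℝ ℝ)) a :=
  (hP.hasFDerivAt.smul_const _).add (hQ.hasFDerivAt.smul_const (snd ℝ ℝ ℝ))

theorem smulRight_fst_add_smulRight_snd_apply_comm {L M : ℝ × ℝ →L[ℝ] ℝ}
    (hLM : L (0, 1) = M (1, 0)) (v w : ℝ × ℝ) :
    (L.smulRight (fst ℝ ℝ ℝ) + M.smulRight (snd ℝ ℝ ℝ)) v w
      = (L.smulRight (fst ℝ ℝ ℝ) + M.smulRight (snd ℝ ℝ ℝ)) w v := by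
  simp only [add_apply, smulRight_apply, smul_apply, coe_fst', coe_snd', smul_eq_mul,
    L.apply_eq_fst_smul_add_snd_smul v, L.apply_eq_fst_smul_add_snd_smul w,
    M.apply_eq_fst_smul_add_snd_smul v, M.apply_eq_fst_smul_add_snd_smul w, hLM]
  ring

theorem hasFDerivAt_curveIntegral_segment_planarOneForm (hP : Differentiable ℝ P)
    (hQ : Differentiable ℝ Q) (hPQ : ∀ a, fderiv ℝ P a (0, 1) = fderiv ℝ Q a (1, 0))
    (a₀ a : ℝ × ℝ) :
    HasFDerivAt (fun b => ∫ᶜ z in .segment a₀ b, planarOneForm P Q z) (planarOneForm P Q a) a := by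
  rw [← hasFDerivWithinAt_univ]
  exact convex_univ.hasFDerivWithinAt_curveIntegral_segment_of_hasFDerivWithinAt_symmetric
    (fun x _ => (hasFDerivAt_planarOneForm (hP x) (hQ x)).hasFDerivWithinAt)
    (fun x _ v _ w _ => smulRight_fst_add_smulRight_snd_apply_comm (hPQ x) v w)
    (mem_univ a₀) (mem_univ a)

end PlanarOneForm

/-- Symmetric mixed second derivatives imply the line-integral Φ is an exact
potential for the two-player game. -/
theorem symmetric_second_derivatives_exact_potential
    (V₁ V₂ : ℝ × ℝ → ℝ)
    (hV₁ : ContDiff ℝ 2 V₁) (hV₂ : ContDiff ℝ 2 V₂)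
    (hmix : ∀ a : ℝ × ℝ,
      deriv (fun y => deriv (fun x => V₁ (x, y)) a.1) a.2
        = deriv (fun x => deriv (fun y => V₂ (x, y)) a.2) a.1)
    (Φ : ℝ × ℝ → ℝ)
    (hΦ : ∀ a₁ a₂ : ℝ, Φ (a₁, a₂) =
      ∫ r in (0:ℝ)..1,
        (deriv (fun x => V₁ (x, r * a₂)) (r * a₁) * a₁
          + deriv (fun y => V₂ (r * a₁, y)) (r * a₂) * a₂)) :
    (∀ a₁ a₁' a₂ : ℝ,
        V₁ (a₁', a₂) - V₁ (a₁, a₂) = Φ (a₁', a₂) - Φ (a₁, a₂)) ∧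
    (∀ a₁ a₂ a₂' : ℝ,
        V₂ (a₁, a₂') - V₂ (a₁, a₂) = Φ (a₁, a₂') - Φ (a₁, a₂)) := by
  set D₁ : ℝ × ℝ → ℝ := fun a => fderiv ℝ V₁ a (1, 0)
  set D₂ : ℝ × ℝ → ℝ := fun a => fderiv ℝ V₂ a (0, 1)
  have hD₁ : Differentiable ℝ D₁ :=
    ((hV₁.fderiv_right (m := 1) (by norm_num)).clm_apply contDiff_const).differentiable one_ne_zero
  have hD₂ : Differentiable ℝ D₂ :=
    ((hV₂.fderiv_right (m := 1) (by norm_num)).clm_apply contDiff_const).differentiable one_ne_zero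
  have hV₁' : Differentiable ℝ V₁ := hV₁.differentiable two_ne_zero
  have hV₂' : Differentiable ℝ V₂ := hV₂.differentiable two_ne_zero
  have hd₁ : ∀ x y, deriv (fun t => V₁ (t, y)) x = D₁ (x, y) := fun _ _ => (hV₁' _).deriv_slice_fst
  have hd₂ : ∀ x y, deriv (fun t => V₂ (x, t)) y = D₂ (x, y) := fun _ _ => (hV₂' _).deriv_slice_snd
  have hclosed : ∀ a, fderiv ℝ D₁ a (0, 1) = fderiv ℝ D₂ a (1, 0) := by
    rintro ⟨x, y⟩
    simpa only [hd₁, hd₂, (hD₁ _).deriv_slice_snd, (hD₂ _).deriv_slice_fst] using hmix (x, y)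
  have hΦ_eq : Φ = fun a => ∫ᶜ z in .segment 0 a, planarOneForm D₁ D₂ z := by
    funext ⟨a₁, a₂⟩
    simp [hΦ, curveIntegral_segment, AffineMap.lineMap_apply, hd₁, hd₂]
  have hΦ' : ∀ a, HasFDerivAt Φ (planarOneForm D₁ D₂ a) a :=
    hΦ_eq ▸ hasFDerivAt_curveIntegral_segment_planarOneForm hD₁ hD₂ hclosed 0
  refine ⟨fun a₁ a₁' a₂ => ?_, fun a₁ a₂ a₂' => ?_⟩
  · refine sub_eq_sub_of_hasDerivAt (g := fun t => Φ (t, a₂))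
      (fun t => (hV₁' (t, a₂)).hasFDerivAt.hasDerivAt_slice_fst) (fun t => ?_) a₁ a₁'
    simpa using (hΦ' (t, a₂)).hasDerivAt_slice_fst
  · refine sub_eq_sub_of_hasDerivAt (g := fun t => Φ (a₁, t))
      (fun t => (hV₂' (a₁, t)).hasFDerivAt.hasDerivAt_slice_snd) (fun t => ?_) a₂ a₂'
    simpa using (hΦ' (a₁, t)).hasDerivAt_slice_snd
end

section
/- Under the hypotheses of the previous Gronwall estimate (|S_i(t)| ≤ ∫₀ᵗ (B|S_i| + B̄ Σ_k |S_k| + |f_i|) du for all i and t ∈ [0,T]), each component satisfies the refined bound: for all i and t ∈ [0,T], |S_i(t)| ≤ ( ∫₀ᵀ |f_i(u)| du + ( ∫₀ᵀ Σ_{k=1}^N |f_k(u)| du ) · B̄ T e^{(B + N B̄) T} ) · e^{B T}. -/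
/-!
Summing the componentwise inequalities gives a closed integral inequality for `∑ k, |S k|` with
rate `B + N * Bbar`, so Grönwall bounds the sum by `(∫₀ᵀ ∑ k, |f k|) * exp ((B + N * Bbar) * T)`.
Writing `M` for that bound and feeding it back into the inequality for a single component
leaves a closed inequality for `|S i|` with rate `B` and forcing `Bbar * M + |f i|`, to which
Grönwall applies once more.
-/

open MeasureTheory Set Real intervalIntegral

lemma IntervalIntegrable.mono_right_of_mem_Icc {E : Type*} [NormedAddCommGroup E]
    {μ : Measure ℝ} {f : ℝ → E} {a b t : ℝ} (hf : IntervalIntegrable f μ a b)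
    (ht : t ∈ Icc a b) : IntervalIntegrable f μ a t :=
  hf.mono_set (uIcc_subset_uIcc_left (Icc_subset_uIcc ht))

theorem le_mul_exp_of_le_add_integral {g : ℝ → ℝ} {C K T : ℝ} (hK : 0 ≤ K)
    (hg : Continuous g) (hle : ∀ t ∈ Icc 0 T, g t ≤ C + ∫ u in 0..t, K * g u) :
    ∀ t ∈ Icc 0 T, g t ≤ C * exp (K * t) := by
  intro t ht
  set F : ℝ → ℝ := fun t => C + ∫ u in 0..t, K * g u
  have hF : ∀ s, HasDerivAt F (K * g s) s := fun s =>
    ((hg.const_mul K).integral_hasStrictDerivAt 0 s).hasDerivAt.const_add C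
  have hF_le : F t ≤ gronwallBound C K 0 (t - 0) :=
    le_gronwallBound_of_liminf_deriv_right_le
      (fun s _ => (hF s).continuousAt.continuousWithinAt)
      (fun s _ _ hr => (hF s).hasDerivWithinAt.liminf_right_slope_le hr)
      (by simp [F])
      (fun s hs => by
        rw [add_zero]; exact mul_le_mul_of_nonneg_left (hle s (Ico_subset_Icc_self hs)) hK)
      t ht
  calc g t ≤ F t := hle t ht
    _ ≤ C * exp (K * t) := by rwa [sub_zero, gronwallBound_ε0] at hF_le

theorem le_integral_mul_exp_of_le_integral_add {φ h : ℝ → ℝ} {K T : ℝ} (hK : 0 ≤ K)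
    (hφ : Continuous φ) (hh : IntervalIntegrable h volume 0 T) (hh_nonneg : 0 ≤ h)
    (hle : ∀ t ∈ Icc 0 T, φ t ≤ ∫ u in 0..t, (K * φ u + h u)) :
    ∀ t ∈ Icc 0 T, φ t ≤ (∫ u in 0..T, h u) * exp (K * T) := by
  intro t ht
  have hC : 0 ≤ ∫ u in 0..T, h u := integral_nonneg (ht.1.trans ht.2) fun u _ => hh_nonneg u
  have hclosed : ∀ s ∈ Icc 0 T, φ s ≤ (∫ u in 0..T, h u) + ∫ u in 0..s, K * φ u := by
    intro s hs
    calc φ s ≤ ∫ u in 0..s, (K * φ u + h u) := hle s hs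
      _ = (∫ u in 0..s, K * φ u) + ∫ u in 0..s, h u :=
        integral_add ((hφ.const_mul K).intervalIntegrable _ _) (hh.mono_right_of_mem_Icc hs)
      _ ≤ (∫ u in 0..s, K * φ u) + ∫ u in 0..T, h u := by
        gcongr
        exact integral_mono_interval le_rfl hs.1 hs.2 (.of_forall hh_nonneg) hh
      _ = (∫ u in 0..T, h u) + ∫ u in 0..s, K * φ u := add_comm _ _
  calc φ t ≤ (∫ u in 0..T, h u) * exp (K * t) := le_mul_exp_of_le_add_integral hK hφ hclosed t ht
    _ ≤ (∫ u in 0..T, h u) * exp (K * T) := by gcongr; exact ht.2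

section CoupledSystem

variable {ι : Type*} [Fintype ι] {x : ℝ → ι → ℝ} {g : ι → ℝ → ℝ} {B Bbar T : ℝ}

lemma intervalIntegrable_mul_add_mul_sum_add (hx : Continuous x)
    (hg : ∀ i, IntervalIntegrable (g i) volume 0 T) {t : ℝ} (ht : t ∈ Icc 0 T) (i : ι) :
    IntervalIntegrable (fun u => B * x u i + Bbar * ∑ k, x u k + g i u) volume 0 t :=
  ((((continuous_apply i).comp hx).const_mul B).add
    ((continuous_finsetSum _ fun k _ => (continuous_apply k).comp hx).const_mul Bbar)
    |>.intervalIntegrable 0 t).add ((hg i).mono_right_of_mem_Icc ht)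

theorem sum_le_integral_of_le_integral (hx : Continuous x)
    (hg : ∀ i, IntervalIntegrable (g i) volume 0 T)
    (hle : ∀ i, ∀ t ∈ Icc 0 T, x t i ≤ ∫ u in 0..t, (B * x u i + Bbar * ∑ k, x u k + g i u)) :
    ∀ t ∈ Icc 0 T, ∑ i, x t i ≤
      ∫ u in 0..t, ((B + Fintype.card ι * Bbar) * ∑ k, x u k + ∑ i, g i u) := by
  intro t ht
  calc ∑ i, x t i ≤ ∑ i, ∫ u in 0..t, (B * x u i + Bbar * ∑ k, x u k + g i u) :=
        Finset.sum_le_sum fun i _ => hle i t ht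
    _ = ∫ u in 0..t, ∑ i, (B * x u i + Bbar * ∑ k, x u k + g i u) :=
        (integral_finsetSum fun i _ => intervalIntegrable_mul_add_mul_sum_add hx hg ht i).symm
    _ = ∫ u in 0..t, ((B + Fintype.card ι * Bbar) * ∑ k, x u k + ∑ i, g i u) := by
        refine integral_congr fun u _ => ?_
        simp only [Finset.sum_add_distrib, ← Finset.mul_sum, Finset.sum_const, Finset.card_univ,
          nsmul_eq_mul]
        ring

theorem le_integral_of_sum_le {M : ℝ} (hBbar : 0 ≤ Bbar) (hx : Continuous x)
    (hg : ∀ i, IntervalIntegrable (g i) volume 0 T)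
    (hle : ∀ i, ∀ t ∈ Icc 0 T, x t i ≤ ∫ u in 0..t, (B * x u i + Bbar * ∑ k, x u k + g i u))
    (hM : ∀ t ∈ Icc 0 T, ∑ k, x t k ≤ M) :
    ∀ i, ∀ t ∈ Icc 0 T, x t i ≤ ∫ u in 0..t, (B * x u i + (Bbar * M + g i u)) := by
  intro i t ht
  refine (hle i t ht).trans (integral_mono_on ht.1
    (intervalIntegrable_mul_add_mul_sum_add hx hg ht i) ?_ fun u hu => ?_)
  · exact ((((continuous_apply i).comp hx).const_mul B).intervalIntegrable 0 t).add
      (intervalIntegrable_const.add ((hg i).mono_right_of_mem_Icc ht))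
  · have hBbar_sum := mul_le_mul_of_nonneg_left (hM u ⟨hu.1, hu.2.trans ht.2⟩) hBbar
    linarith

end CoupledSystem

theorem gronwall_component_estimate_general
    (N : ℕ) (T B Bbar : ℝ) (hB : 0 ≤ B) (hBbar : 0 ≤ Bbar)
    (S : ℝ → Fin N → ℝ) (hS : Continuous S)
    (f : Fin N → ℝ → ℝ)
    (hf : ∀ i, IntervalIntegrable (f i) MeasureTheory.volume 0 T)
    (hineq : ∀ (i : Fin N), ∀ t ∈ Set.Icc (0:ℝ) T,
      |S t i| ≤ ∫ u in (0:ℝ)..t,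
        (B * |S u i| + Bbar * ∑ k, |S u k| + |f i u|)) :
    ∀ (i : Fin N), ∀ t ∈ Set.Icc (0:ℝ) T,
      |S t i| ≤ ((∫ u in (0:ℝ)..T, |f i u|)
          + (∫ u in (0:ℝ)..T, ∑ k, |f k u|) * Bbar * T * Real.exp ((B + N * Bbar) * T))
        * Real.exp (B * T) := by
  intro i t ht
  have hx : Continuous fun u k => |S u k| :=
    continuous_pi fun k => ((continuous_apply k).comp hS).abs
  have habs : ∀ k, IntervalIntegrable (fun u => |f k u|) volume 0 T := fun k => (hf k).abs
  have hsum_abs : IntervalIntegrable (fun u => ∑ k, |f k u|) volume 0 T := by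
    simpa only [Finset.sum_fn] using IntervalIntegrable.sum Finset.univ fun k _ => habs k
  set M := (∫ u in 0..T, ∑ k, |f k u|) * exp ((B + N * Bbar) * T)
  have hM_nonneg : 0 ≤ M := mul_nonneg (integral_nonneg (ht.1.trans ht.2) fun u _ => by positivity)
    (exp_pos _).le
  have hsum : ∀ t ∈ Icc 0 T, ∑ k, |S t k| ≤ M := by
    refine le_integral_mul_exp_of_le_integral_add (by positivity)
      (continuous_finsetSum _ fun k _ => (continuous_apply k).comp hx) hsum_abs
      (fun u => by positivity) ?_
    simpa only [Fintype.card_fin] using sum_le_integral_of_le_integral hx habs hineq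
  calc |S t i| ≤ (∫ u in 0..T, (Bbar * M + |f i u|)) * exp (B * T) :=
        le_integral_mul_exp_of_le_integral_add hB ((continuous_apply i).comp hx)
          (intervalIntegrable_const.add (habs i)) (fun u => by positivity)
          (le_integral_of_sum_le hBbar hx habs hineq hsum i) t ht
    _ = _ := by
        rw [integral_add intervalIntegrable_const (habs i), intervalIntegral.integral_const,
          smul_eq_mul, sub_zero]
        ring

/-- Refined componentwise Gronwall estimate for the sensitivity processes. -/
theorem gronwall_component_estimate
    (N : ℕ) (T B Bbar : ℝ) (hT : 0 < T) (hB : 0 ≤ B) (hBbar : 0 ≤ Bbar)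
    (S : ℝ → Fin N → ℝ) (hS : Continuous S)
    (f : Fin N → ℝ → ℝ)
    (hf : ∀ i, IntervalIntegrable (f i) MeasureTheory.volume 0 T)
    (hineq : ∀ (i : Fin N), ∀ t ∈ Set.Icc (0:ℝ) T,
      |S t i| ≤ ∫ u in (0:ℝ)..t,
        (B * |S u i| + Bbar * ∑ k, |S u k| + |f i u|)) :
    ∀ (i : Fin N), ∀ t ∈ Set.Icc (0:ℝ) T,
      |S t i| ≤ ((∫ u in (0:ℝ)..T, |f i u|)
          + (∫ u in (0:ℝ)..T, ∑ k, |f k u|) * Bbar * T * Real.exp ((B + N * Bbar) * T))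
        * Real.exp (B * T) :=
  gronwall_component_estimate_general N T B Bbar hB hBbar S hS f hf hineq
end
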